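/- Let 0 < σ < 2 and 0 < x < 1. Then the integral ∫_0^∞ W_t(x) t^{-1-σ/2} dt is finite and ∫_0^∞ W_t(x) t^{-1-σ/2} dt = (4^{σ/2} Γ((1+σ)/2)/√π) · (ζ(1+σ, x) + ζ(1+σ, 1-x)), where ζ(1+σ, a) = ∑_{k=0}^∞ (k+a)^{-1-σ}. -/

import Mathlib

open MeasureTheory

/-- The heat kernel on the unit circle, identified with `[0,1]`:
`W_t(x) = 1 + 2 ∑_{k=1}^∞ e^{-4π²k²t} cos(2πkx)`. -/
noncomputable def circleHeatKernel (t x : ℝ) : ℝ :=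
  1 + 2 * ∑' k : ℕ, Real.exp (-4 * Real.pi ^ 2 * ((k : ℝ) + 1) ^ 2 * t) *
    Real.cos (2 * Real.pi * ((k : ℝ) + 1) * x)

/-!
By Poisson summation the circle heat kernel is the periodization of the heat kernel on the line,
`W_t(x) = ∑_{n ∈ ℤ} (4πt)^{-1/2} e^{-(n+x)²/(4t)}`. Against `t^{-1-σ/2}` each Gaussian
integrates, after the substitution `t ↦ 1/t`, to a Gamma integral, giving
`4^{σ/2} Γ((1+σ)/2)/√π · |n+x|^{-1-σ}`. All terms are nonnegative, so integral and sum commute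
(Tonelli), and the sum of `|n+x|^{-1-σ}` over `n ≥ 0` and `n < 0` gives the two Hurwitz series.
-/

open Set Filter Real HurwitzZeta

theorem integrable_and_hasSum_integral_of_nonneg {α ι : Type*} [MeasurableSpace α]
    {μ : Measure α} [Countable ι] {f : ι → α → ℝ} {F : α → ℝ} (hf_int : ∀ i, Integrable (f i) μ)
    (hf_nonneg : ∀ i, 0 ≤ᵐ[μ] f i) (hF : ∀ᵐ a ∂μ, HasSum (fun i => f i a) (F a))
    (h_sum : Summable fun i => ∫ a, f i a ∂μ) :
    Integrable F μ ∧ HasSum (fun i => ∫ a, f i a ∂μ) (∫ a, F a ∂μ) := by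
  have hf_nonneg' : ∀ᵐ a ∂μ, ∀ i, 0 ≤ f i a := ae_all_iff.2 hf_nonneg
  have hF_nonneg : 0 ≤ᵐ[μ] F := by
    filter_upwards [hF, hf_nonneg'] with a ha h0 using ha.nonneg h0
  have hF_meas : AEStronglyMeasurable F μ :=
    aestronglyMeasurable_of_tendsto_ae atTop
      (fun s => Finset.aestronglyMeasurable_fun_sum s fun i _ => (hf_int i).1) hF
  have h_lintegral : ∫⁻ a, ENNReal.ofReal (F a) ∂μ = ENNReal.ofReal (∑' i, ∫ a, f i a ∂μ) := by
    calc ∫⁻ a, ENNReal.ofReal (F a) ∂μ = ∫⁻ a, ∑' i, ENNReal.ofReal (f i a) ∂μ := by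
          refine lintegral_congr_ae ?_
          filter_upwards [hF, hf_nonneg'] with a ha h0
          rw [← ha.tsum_eq, ENNReal.ofReal_tsum_of_nonneg h0 ha.summable]
      _ = ∑' i, ENNReal.ofReal (∫ a, f i a ∂μ) := by
          rw [lintegral_tsum fun i => (hf_int i).1.aemeasurable.ennreal_ofReal]
          exact tsum_congr fun i =>
            (ofReal_integral_eq_lintegral_ofReal (hf_int i) (hf_nonneg i)).symm
      _ = _ := (ENNReal.ofReal_tsum_of_nonneg (fun i => integral_nonneg_of_ae (hf_nonneg i))
            h_sum).symm
  have h_int : Integrable F μ :=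
    ⟨hF_meas, (hasFiniteIntegral_iff_ofReal hF_nonneg).2 (h_lintegral ▸ ENNReal.ofReal_lt_top)⟩
  refine ⟨h_int, ?_⟩
  have h_norm : (fun i => ∫ a, ‖f i a‖ ∂μ) = fun i => ∫ a, f i a ∂μ := funext fun i =>
    integral_congr_ae <| (hf_nonneg i).mono fun a ha => Real.norm_of_nonneg ha
  rw [integral_congr_ae (hF.mono fun a ha => ha.tsum_eq.symm)]
  exact hasSum_integral_of_summable_integral_norm hf_int (h_norm ▸ h_sum)

lemma rpow_neg_one_substitution {s c t : ℝ} (ht : 0 < t) :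
    (|(-1 : ℝ)| * t ^ ((-1 : ℝ) - 1)) • ((t ^ (-1 : ℝ)) ^ (s - 1) * exp (-(c * t ^ (-1 : ℝ)))) =
      t ^ (-s - 1) * exp (-c / t) := by
  rw [smul_eq_mul, abs_neg, abs_one, one_mul, ← rpow_mul ht.le, ← mul_assoc, ← rpow_add ht,
    rpow_neg_one, ← div_eq_mul_inv, neg_div]
  ring_nf

theorem integrableOn_rpow_mul_exp_neg_div_Ioi {s c : ℝ} (hs : 0 < s) (hc : 0 < c) :
    IntegrableOn (fun t : ℝ => t ^ (-s - 1) * exp (-c / t)) (Ioi 0) := by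
  have h := integrableOn_rpow_mul_exp_neg_mul_rpow (s := s - 1) (by linarith) one_pos hc
  simp_rw [rpow_one, neg_mul] at h
  refine ((integrableOn_Ioi_comp_rpow_iff _ (by norm_num : (-1 : ℝ) ≠ 0)).2 h).congr_fun
    (fun t ht => rpow_neg_one_substitution ht) measurableSet_Ioi

theorem integral_rpow_mul_exp_neg_div_Ioi {s c : ℝ} (hs : 0 < s) (hc : 0 < c) :
    ∫ t in Ioi (0 : ℝ), t ^ (-s - 1) * exp (-c / t) = (1 / c) ^ s * Gamma s := by
  rw [← integral_rpow_mul_exp_neg_mul_Ioi hs hc,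
    ← integral_comp_rpow_Ioi (fun y => y ^ (s - 1) * exp (-(c * y))) (by norm_num : (-1 : ℝ) ≠ 0)]
  exact setIntegral_congr_fun measurableSet_Ioi fun t ht => (rpow_neg_one_substitution ht).symm

noncomputable def realHeatKernel (t a : ℝ) : ℝ :=
  (4 * π * t) ^ (-(1 / 2) : ℝ) * exp (-a ^ 2 / (4 * t))

lemma realHeatKernel_mul_rpow {t : ℝ} (ht : 0 < t) (a σ : ℝ) :
    realHeatKernel t a * t ^ (-1 - σ / 2) =
      (4 * π) ^ (-(1 / 2) : ℝ) * (t ^ (-((1 + σ) / 2) - 1) * exp (-(a ^ 2 / 4) / t)) := by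
  have hexp : -a ^ 2 / (4 * t) = -(a ^ 2 / 4) / t := by ring
  have hpow : t ^ (-(1 / 2) : ℝ) * t ^ (-1 - σ / 2) = t ^ (-((1 + σ) / 2) - 1) := by
    rw [← rpow_add ht]; ring_nf
  rw [realHeatKernel, mul_rpow (by positivity) ht.le, hexp, ← hpow]
  ring

theorem integrableOn_realHeatKernel_mul_rpow {σ a : ℝ} (hσ : -1 < σ) (ha : a ≠ 0) :
    IntegrableOn (fun t => realHeatKernel t a * t ^ (-1 - σ / 2)) (Ioi 0) :=
  IntegrableOn.congr_fun
    ((integrableOn_rpow_mul_exp_neg_div_Ioi (s := (1 + σ) / 2) (c := a ^ 2 / 4) (by linarith)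
      (by positivity)).const_mul _)
    (fun t ht => (realHeatKernel_mul_rpow ht a σ).symm) measurableSet_Ioi

lemma rpow_four_pi_mul_gamma_eq (σ a : ℝ) :
    (4 * π) ^ (-(1 / 2) : ℝ) * ((1 / (a ^ 2 / 4)) ^ ((1 + σ) / 2) * Gamma ((1 + σ) / 2)) =
      4 ^ (σ / 2) * Gamma ((1 + σ) / 2) / √π * |a| ^ (-(1 + σ)) := by
  have h4π : (4 * π) ^ (-(1 / 2) : ℝ) = (2 * √π)⁻¹ := by
    rw [rpow_neg (by positivity), ← sqrt_eq_rpow, sqrt_mul zero_le_four,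
      show (4 : ℝ) = 2 ^ 2 by norm_num, sqrt_sq zero_le_two]
  have h4 : (4 : ℝ) ^ ((1 + σ) / 2) = 2 * 4 ^ (σ / 2) := by
    rw [add_div, rpow_add four_pos, ← sqrt_eq_rpow, show (4 : ℝ) = 2 ^ 2 by norm_num,
      sqrt_sq zero_le_two]
  have ha2 : (|a| ^ 2) ^ ((1 + σ) / 2) = |a| ^ (1 + σ) := by
    rw [← rpow_natCast, ← rpow_mul (abs_nonneg a)]; ring_nf
  have hquot : (1 / (a ^ 2 / 4)) ^ ((1 + σ) / 2) = 2 * 4 ^ (σ / 2) * |a| ^ (-(1 + σ)) := by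
    rw [one_div_div, ← sq_abs, div_rpow zero_le_four (by positivity), h4, ha2,
      rpow_neg (abs_nonneg a), div_eq_mul_inv]
  rw [h4π, hquot]
  field_simp

theorem integral_realHeatKernel_mul_rpow {σ a : ℝ} (hσ : -1 < σ) (ha : a ≠ 0) :
    ∫ t in Ioi (0 : ℝ), realHeatKernel t a * t ^ (-1 - σ / 2) =
      4 ^ (σ / 2) * Gamma ((1 + σ) / 2) / √π * |a| ^ (-(1 + σ)) := by
  rw [setIntegral_congr_fun measurableSet_Ioi fun t ht => realHeatKernel_mul_rpow ht a σ,
    integral_const_mul, integral_rpow_mul_exp_neg_div_Ioi (by linarith) (by positivity)]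
  exact rpow_four_pi_mul_gamma_eq σ a

lemma circleHeatKernel_eq_cosKernel (x : ℝ) {t : ℝ} (ht : 0 < t) :
    circleHeatKernel t x = cosKernel x (4 * π * t) := by
  have h : HasSum (fun k : ℕ => 2 * (exp (-4 * π ^ 2 * ((k : ℝ) + 1) ^ 2 * t) *
      cos (2 * π * ((k : ℝ) + 1) * x))) (cosKernel x (4 * π * t) - 1) :=
    (hasSum_nat_cosKernel₀ x (by positivity)).congr_fun fun k => by ring_nf
  rw [circleHeatKernel, ← tsum_mul_left, h.tsum_eq]
  ring

theorem hasSum_circleHeatKernel (x : ℝ) {t : ℝ} (ht : 0 < t) :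
    HasSum (fun n : ℤ => realHeatKernel t (n + x)) (circleHeatKernel t x) := by
  have hu : 0 < (4 * π * t)⁻¹ := by positivity
  have h_fe : evenKernel x (4 * π * t)⁻¹ =
      (4 * π * t) ^ (1 / 2 : ℝ) * cosKernel x (4 * π * t) := by
    rw [evenKernel_functional_equation, inv_rpow (by positivity)]
    simp only [one_div, inv_inv]
  have h_theta : circleHeatKernel t x =
      (4 * π * t) ^ (-(1 / 2) : ℝ) * evenKernel x (4 * π * t)⁻¹ := by
    rw [h_fe, ← mul_assoc, ← rpow_add (by positivity), neg_add_cancel, rpow_zero, one_mul,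
      circleHeatKernel_eq_cosKernel x ht]
  rw [h_theta]
  refine ((hasSum_int_evenKernel x hu).mul_left _).congr_fun fun n => ?_
  rw [realHeatKernel]
  congr 2
  field_simp

lemma summable_nat_add_rpow_neg {a p : ℝ} (ha : 0 < a) (hp : 1 < p) :
    Summable fun k : ℕ => ((k : ℝ) + a) ^ (-p) := by
  refine ((summable_one_div_nat_add_rpow a p).2 hp).congr fun k => ?_
  have hk : 0 < (k : ℝ) + a := by positivity
  rw [abs_of_pos hk, rpow_neg hk.le, one_div]

theorem hasSum_int_abs_add_rpow_neg {x p : ℝ} (hx0 : 0 < x) (hx1 : x < 1) (hp : 1 < p) :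
    HasSum (fun n : ℤ => |(n : ℝ) + x| ^ (-p))
      ((∑' k : ℕ, ((k : ℝ) + x) ^ (-p)) + ∑' k : ℕ, ((k : ℝ) + (1 - x)) ^ (-p)) := by
  refine HasSum.of_nat_of_neg_add_one ?_ ?_
  · refine (summable_nat_add_rpow_neg hx0 hp).hasSum.congr_fun fun k => ?_
    rw [Int.cast_natCast, abs_of_pos (by positivity)]
  · refine (summable_nat_add_rpow_neg (sub_pos.2 hx1) hp).hasSum.congr_fun fun k => ?_
    have hk : 0 < (k : ℝ) + (1 - x) := by linarith [k.cast_nonneg (α := ℝ)]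
    rw [show ((-(k + 1) : ℤ) : ℝ) + x = -((k : ℝ) + (1 - x)) by push_cast; ring, abs_neg,
      abs_of_pos hk]

lemma intCast_add_ne_zero {x : ℝ} (hx0 : 0 < x) (hx1 : x < 1) (n : ℤ) : (n : ℝ) + x ≠ 0 := by
  intro h
  have h1 : (-1 : ℝ) < n := by linarith
  have h2 : (n : ℝ) < 0 := by linarith
  norm_cast at h1 h2
  omega

theorem stmt7_general (σ : ℝ) (h0 : 0 < σ) (x : ℝ) (hx0 : 0 < x) (hx1 : x < 1) :
    IntegrableOn (fun t : ℝ => circleHeatKernel t x * t ^ (-1 - σ / 2)) (Set.Ioi 0) ∧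
    ∫ t in Set.Ioi (0 : ℝ), circleHeatKernel t x * t ^ (-1 - σ / 2) =
      (4 : ℝ) ^ (σ / 2) * Real.Gamma ((1 + σ) / 2) / Real.sqrt Real.pi *
        ((∑' k : ℕ, ((k : ℝ) + x) ^ (-(1 + σ))) +
          ∑' k : ℕ, ((k : ℝ) + (1 - x)) ^ (-(1 + σ))) := by
  set g : ℤ → ℝ → ℝ := fun n t => realHeatKernel t (n + x) * t ^ (-1 - σ / 2)
  have hσ : -1 < σ := by linarith
  have h_integral (n : ℤ) := integral_realHeatKernel_mul_rpow hσ (intCast_add_ne_zero hx0 hx1 n)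
  have h_sum : HasSum (fun n => ∫ t in Ioi 0, g n t)
      (4 ^ (σ / 2) * Gamma ((1 + σ) / 2) / √π * ((∑' k : ℕ, ((k : ℝ) + x) ^ (-(1 + σ))) +
        ∑' k : ℕ, ((k : ℝ) + (1 - x)) ^ (-(1 + σ)))) := by
    simp only [g, h_integral]
    exact (hasSum_int_abs_add_rpow_neg hx0 hx1 (by linarith)).mul_left _
  obtain ⟨h_int, h_sum_integral⟩ := integrable_and_hasSum_integral_of_nonneg
    (μ := volume.restrict (Ioi 0)) (F := fun t => circleHeatKernel t x * t ^ (-1 - σ / 2))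
    (fun n => integrableOn_realHeatKernel_mul_rpow hσ (intCast_add_ne_zero hx0 hx1 n))
    (fun n => ae_restrict_of_forall_mem measurableSet_Ioi fun t (ht : 0 < t) => by
      simp only [realHeatKernel]; positivity)
    (ae_restrict_of_forall_mem measurableSet_Ioi fun t ht =>
      (hasSum_circleHeatKernel x ht).mul_right _)
    h_sum.summable
  exact ⟨h_int, h_sum_integral.unique h_sum⟩

theorem stmt7 (σ : ℝ) (h0 : 0 < σ) (h2 : σ < 2) (x : ℝ) (hx0 : 0 < x) (hx1 : x < 1) :
    IntegrableOn (fun t : ℝ => circleHeatKernel t x * t ^ (-1 - σ / 2)) (Set.Ioi 0) ∧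
    ∫ t in Set.Ioi (0 : ℝ), circleHeatKernel t x * t ^ (-1 - σ / 2) =
      (4 : ℝ) ^ (σ / 2) * Real.Gamma ((1 + σ) / 2) / Real.sqrt Real.pi *
        ((∑' k : ℕ, ((k : ℝ) + x) ^ (-(1 + σ))) +
          ∑' k : ℕ, ((k : ℝ) + (1 - x)) ^ (-(1 + σ))) :=
  stmt7_general σ h0 x hx0 hx1
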